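/- Let G be a subgroup of Perm (Fin 5) that acts transitively on Fin 5 and is generated by a set of 5-cycles (elements of cycle type {5}). Then G is conjugate in Perm (Fin 5) to the cyclic group C_5 = ⟨(1 2 3 4 5)⟩ or G equals the alternating group A_5. (This is the group-theoretic content of Theorem 3.10(6): a 5-fold covering of ℙ¹ all of whose branch values are of type [5] has monodromy group C_5 or A_5.) -/

import Mathlib

/-!
All 5-cycles are even, so `G ≤ A₅`, and `5 ∣ |G| ∣ 60`. Sylow's theorems then leave two cases.
If `G` has a unique Sylow 5-subgroup, it contains every 5-cycle of `G`, hence all generators,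
so `G` is cyclic of order 5, generated by a 5-cycle conjugate to `(1 2 3 4 5)`. Otherwise there
are six Sylow 5-subgroups, forcing `30 ∣ |G|`; as the simple group `A₅` has no subgroup of
index 2, `G = A₅`.
-/

open Equiv

/-- The cyclic subgroup `C₅ = ⟨(1 2 3 4 5)⟩` of `Perm (Fin 5)`. -/
def C5 : Subgroup (Equiv.Perm (Fin 5)) := Subgroup.closure {c[0, 1, 2, 3, 4]}

/-- `H` is conjugate to `K` in `Perm (Fin 5)`: `σ H σ⁻¹ = K` for some `σ`. -/
def SubConj (H K : Subgroup (Equiv.Perm (Fin 5))) : Prop :=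
  ∃ σ : Equiv.Perm (Fin 5), Subgroup.map (MulAut.conj σ).toMonoidHom H = K

instance Nat.fact_prime_five : Fact (Nat.Prime 5) := ⟨Nat.prime_five⟩

theorem Equiv.Perm.mem_alternatingGroup_of_cycleType_eq_singleton {α : Type*} [Fintype α]
    [DecidableEq α] {σ : Perm α} {n : ℕ} (hn : Odd n) (hσ : σ.cycleType = {n}) :
    σ ∈ alternatingGroup α := by
  rw [Perm.mem_alternatingGroup, Perm.sign_of_cycleType, hσ]
  exact (hn.add_odd odd_one).neg_one_pow

theorem Equiv.Perm.nonempty_of_closure_pretransitive {α : Type*} [Nontrivial α]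
    {S : Set (Perm α)} (h : ∀ x y : α, ∃ g ∈ Subgroup.closure S, g x = y) : S.Nonempty := by
  obtain ⟨x, y, hxy⟩ := exists_pair_ne α
  rw [Set.nonempty_iff_ne_empty]
  rintro rfl
  obtain ⟨g, hg, hgxy⟩ := h x y
  rw [Subgroup.closure_empty, Subgroup.mem_bot] at hg
  subst hg
  exact hxy hgxy

theorem IsSimpleGroup.index_ne_two {G : Type*} [Group G] [IsSimpleGroup G]
    (hG : Nat.card G ≠ 2) (H : Subgroup G) : H.index ≠ 2 := fun hH ↦ by
  rcases (Subgroup.normal_of_index_eq_two hH).eq_bot_or_eq_top with rfl | rfl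
  · exact hG (by rwa [Subgroup.index_bot] at hH)
  · simp at hH

theorem IsPGroup.of_closure_eq_top {G : Type*} [Group G] [Finite G] {p : ℕ} [Fact p.Prime]
    [Subsingleton (Sylow p G)] {T : Set G} (hT : Subgroup.closure T = ⊤)
    (hpT : ∀ g ∈ T, ∃ k, orderOf g = p ^ k) : IsPGroup p G := by
  obtain ⟨P⟩ : Nonempty (Sylow p G) := Sylow.nonempty
  have hTP : T ⊆ P := fun g hg ↦ by
    obtain ⟨k, hk⟩ := hpT g hg
    obtain ⟨Q, hQ⟩ := (IsPGroup.of_card (G := Subgroup.zpowers g)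
      (by rw [Nat.card_zpowers, hk])).exists_le_sylow
    exact Subsingleton.elim Q P ▸ hQ (Subgroup.mem_zpowers g)
  have hP : (P : Subgroup G) = ⊤ := top_le_iff.mp (hT ▸ (Subgroup.closure_le _).mpr hTP)
  exact P.isPGroup'.of_equiv ((MulEquiv.subgroupCongr hP).trans Subgroup.topEquiv)

theorem Subgroup.card_closure_eq_prime {G : Type*} [Group G] [Finite G] {p m : ℕ}
    [Fact p.Prime] (hpm : p.Coprime m) {S : Set G} (hS : ∀ g ∈ S, orderOf g = p)
    [Subsingleton (Sylow p (closure S))] (hp : p ∣ Nat.card (closure S))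
    (hdvd : Nat.card (closure S) ∣ p * m) : Nat.card (closure S) = p := by
  obtain ⟨k, hk⟩ := IsPGroup.iff_card.mp (IsPGroup.of_closure_eq_top
    (closure_closure_coe_preimage (k := S))
    fun g hg ↦ ⟨1, by rw [← orderOf_coe, hS _ hg, pow_one]⟩)
  rw [hk] at hp hdvd ⊢
  exact Nat.dvd_antisymm ((hpm.pow_left k).dvd_of_dvd_mul_right hdvd) hp

theorem card_sylow_five_eq_one_or_thirty_dvd {G : Type*} [Group G] [Finite G]
    (h5 : 5 ∣ Nat.card G) (h60 : Nat.card G ∣ 60) :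
    Nat.card (Sylow 5 G) = 1 ∨ 30 ∣ Nat.card G := by
  obtain ⟨P⟩ : Nonempty (Sylow 5 G) := Sylow.nonempty
  have hn5 : Nat.card (Sylow 5 G) ∣ 60 :=
    (P.card_dvd_index.trans (P : Subgroup G).index_dvd_card).trans h60
  have hmod : Nat.card (Sylow 5 G) ≡ 1 [MOD 5] := card_sylow_modEq_one 5 G
  have hP5 : 5 ∣ Nat.card P := by simpa using P.pow_dvd_card_of_pow_dvd_card (n := 1) (by simpa)
  have h6 : Nat.card (Sylow 5 G) = 1 ∨ Nat.card (Sylow 5 G) = 6 := by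
    have hle := Nat.le_of_dvd (by norm_num) hn5
    unfold Nat.ModEq at hmod
    interval_cases Nat.card (Sylow 5 G) <;> simp_all
  refine h6.imp_right fun h ↦ ?_
  rw [← (P : Subgroup G).card_mul_index]
  exact Nat.Coprime.mul_dvd_of_dvd_of_dvd (by norm_num) (hP5.mul_right _)
    ((h ▸ P.card_dvd_index).mul_left _)

theorem nat_card_alternatingGroup_fin_five : Nat.card (alternatingGroup (Fin 5)) = 60 := by
  rw [nat_card_alternatingGroup, Nat.card_fin]; rfl

theorem eq_alternatingGroup_of_thirty_dvd_card {H : Subgroup (Perm (Fin 5))}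
    (hH : H ≤ alternatingGroup (Fin 5)) (h30 : 30 ∣ Nat.card H) :
    H = alternatingGroup (Fin 5) := by
  set K := H.subgroupOf (alternatingGroup (Fin 5))
  have hK : Nat.card K * K.index = 60 := by
    rw [K.card_mul_index, nat_card_alternatingGroup_fin_five]
  have hKH : Nat.card K = Nat.card H := Nat.card_congr (Subgroup.subgroupOfEquivOfLe hH).toEquiv
  have hidx : K.index ∣ 2 := by
    obtain ⟨m, hm⟩ := h30
    rw [hKH, hm] at hK
    exact Dvd.intro_left m (by linarith)
  have h1 : K.index = 1 := by
    have := IsSimpleGroup.index_ne_two (by rw [nat_card_alternatingGroup_fin_five]; decide) K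
    have := Nat.le_of_dvd two_pos hidx
    interval_cases K.index <;> simp_all
  exact le_antisymm hH (Subgroup.subgroupOf_eq_top.mp (Subgroup.index_eq_one.mp h1))

theorem subConj_zpowers_C5 {σ : Perm (Fin 5)} (hσ : σ.cycleType = {5}) :
    SubConj (Subgroup.zpowers σ) C5 := by
  obtain ⟨τ, hτ⟩ := isConj_iff.mp
    ((Perm.isConj_iff_cycleType_eq (σ := σ) (τ := c[0, 1, 2, 3, 4])).mpr (by rw [hσ]; decide))
  refine ⟨τ, ?_⟩
  rw [MonoidHom.map_zpowers, C5, ← Subgroup.zpowers_eq_closure]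
  simp [MulAut.conj_apply, hτ]

/-- A transitive subgroup of `Perm (Fin 5)` generated by a set of 5-cycles is
conjugate to `C₅` or equal to the alternating group `A₅`. -/
theorem transitive_subgroup_generated_by_five_cycles
    (G : Subgroup (Equiv.Perm (Fin 5)))
    (htrans : ∀ x y : Fin 5, ∃ g ∈ G, g x = y)
    (S : Set (Equiv.Perm (Fin 5)))
    (hS : ∀ σ ∈ S, Equiv.Perm.cycleType σ = {5})
    (hgen : Subgroup.closure S = G) :
    SubConj G C5 ∨ G = alternatingGroup (Fin 5) := by
  subst hgen
  have hord : ∀ σ ∈ S, orderOf σ = 5 := fun σ hσ ↦ by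
    rw [← Perm.lcm_cycleType, hS σ hσ]; rfl
  have hGA : Subgroup.closure S ≤ alternatingGroup (Fin 5) := (Subgroup.closure_le _).mpr
    fun σ hσ ↦ Perm.mem_alternatingGroup_of_cycleType_eq_singleton (by decide) (hS σ hσ)
  obtain ⟨σ, hσS⟩ := Perm.nonempty_of_closure_pretransitive htrans
  have hσG : σ ∈ Subgroup.closure S := Subgroup.subset_closure hσS
  have h5 : 5 ∣ Nat.card (Subgroup.closure S) := by
    have := orderOf_dvd_natCard (⟨σ, hσG⟩ : Subgroup.closure S)
    rwa [Subgroup.orderOf_mk, hord σ hσS] at this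
  have h60 : Nat.card (Subgroup.closure S) ∣ 60 :=
    nat_card_alternatingGroup_fin_five ▸ Subgroup.card_dvd_of_le hGA
  rcases card_sylow_five_eq_one_or_thirty_dvd h5 h60 with h1 | h30
  · have := (Nat.card_eq_one_iff_unique.mp h1).1
    have hcard := Subgroup.card_closure_eq_prime (m := 12) (by norm_num) hord h5 h60
    have hzp : Subgroup.zpowers σ = Subgroup.closure S :=
      Subgroup.eq_of_le_of_card_ge (Subgroup.zpowers_le.mpr hσG)
        (by rw [hcard, Nat.card_zpowers, hord σ hσS])
    exact Or.inl (hzp ▸ subConj_zpowers_C5 (hS σ hσS))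
  · exact Or.inr (eq_alternatingGroup_of_thirty_dvd_card hGA h30)
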